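/- If λ(n) - d·log n → -∞, then the probability that the percolated Hamming graph H_λ(d,n) is connected tends to 0. -/

import Mathlib

open MeasureTheory Filter Topology

/-- The `d`-dimensional Hamming graph on `[n]^d`: vertices are adjacent iff
they differ in exactly one coordinate. -/
def hGraph (d n : ℕ) : SimpleGraph (Fin d → Fin n) where
  Adj v w := (Finset.univ.filter fun i => v i ≠ w i).card = 1
  symm := by
    constructor
    intro v w h
    rw [show (Finset.univ.filter fun i => w i ≠ v i)
        = (Finset.univ.filter fun i => v i ≠ w i) from
      Finset.filter_congr fun i _ => ne_comm]
    exact h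
  loopless := by constructor; intro v h; simp at h

instance (d n : ℕ) : DecidableRel (hGraph d n).Adj :=
  fun v w => inferInstanceAs
    (Decidable ((Finset.univ.filter fun i => v i ≠ w i).card = 1))

/-- Bernoulli measure on `Bool` with success probability `p`. -/
noncomputable def berBool (p : ENNReal) : Measure Bool :=
  p • Measure.dirac true + (1 - p) • Measure.dirac false

/-- Bernoulli bond percolation on the Hamming graph: an i.i.d. Bernoulli(p)
configuration indexed by (potential) edges. -/
noncomputable def percMeasure (d n : ℕ) (p : ENNReal) :
    Measure (Sym2 (Fin d → Fin n) → Bool) :=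
  Measure.pi fun _ => berBool p

/-- A vertex is isolated if none of its incident edges is retained. -/
def isolated (d n : ℕ) (ω : Sym2 (Fin d → Fin n) → Bool)
    (v : Fin d → Fin n) : Prop :=
  ∀ w, (hGraph d n).Adj v w → ω s(v, w) = false

instance (d n : ℕ) (ω : Sym2 (Fin d → Fin n) → Bool) (v : Fin d → Fin n) :
    Decidable (isolated d n ω v) := by
  unfold isolated; infer_instance

/-- The number of isolated vertices in a percolation configuration. -/
def numIsolated (d n : ℕ) (ω : Sym2 (Fin d → Fin n) → Bool) : ℕ :=
  (Finset.univ.filter fun v => isolated d n ω v).card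

/-- The percolated Hamming graph: retained edges only. -/
def percGraph (d n : ℕ) (ω : Sym2 (Fin d → Fin n) → Bool) :
    SimpleGraph (Fin d → Fin n) where
  Adj v w := (hGraph d n).Adj v w ∧ ω s(v, w) = true
  symm := by
    constructor
    intro v w h
    exact ⟨(hGraph d n).symm.symm v w h.1, by rw [Sym2.eq_swap]; exact h.2⟩
  loopless := ⟨fun v h => (hGraph d n).loopless.irrefl v h.1⟩


/-! ### Auxiliary lemmas -/

section PercAux

lemma berBool_false {p : ENNReal} : berBool p {false} = 1 - p := by
  simp [berBool, Measure.dirac_apply, Set.indicator_apply]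

lemma berBool_isProb {p : ENNReal} (hp : p ≤ 1) : IsProbabilityMeasure (berBool p) := by
  constructor
  simp [berBool, Measure.dirac_apply, Set.indicator_apply]
  exact add_tsub_cancel_of_le hp

variable {d n : ℕ}

lemma percMeasure_isProb {p : ENNReal} (hp : p ≤ 1) :
    IsProbabilityMeasure (percMeasure d n p) := by
  haveI : ∀ e : Sym2 (Fin d → Fin n), IsProbabilityMeasure (berBool p) :=
    fun _ => berBool_isProb hp
  unfold percMeasure
  infer_instance

lemma cylinder {p : ENNReal} (hp : p ≤ 1) (E : Finset (Sym2 (Fin d → Fin n))) :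
    percMeasure d n p {ω | ∀ e ∈ E, ω e = false} = (1 - p) ^ E.card := by
  haveI : ∀ e : Sym2 (Fin d → Fin n), IsProbabilityMeasure (berBool p) :=
    fun _ => berBool_isProb hp
  have hset : {ω : Sym2 (Fin d → Fin n) → Bool | ∀ e ∈ E, ω e = false}
      = Set.univ.pi (fun e => if e ∈ E then ({false} : Set Bool) else Set.univ) := by
    ext ω
    simp only [Set.mem_setOf_eq, Set.mem_pi, Set.mem_univ, forall_true_left]
    constructor
    · intro h e; by_cases he : e ∈ E <;> simp [he, h]
    · intro h e he; have := h e; simp [he] at this; exact this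
  rw [hset, percMeasure, Measure.pi_pi]
  have : ∀ e : Sym2 (Fin d → Fin n),
      berBool p (if e ∈ E then ({false} : Set Bool) else Set.univ)
        = if e ∈ E then (1 - p) else 1 := by
    intro e
    by_cases he : e ∈ E
    · simp [he, berBool_false]
    · simp only [if_neg he]
      haveI := berBool_isProb hp
      exact measure_univ
  rw [Finset.prod_congr rfl (fun e _ => this e), Finset.prod_ite_mem,
    Finset.univ_inter, Finset.prod_const]

noncomputable def edgeSet (d n : ℕ) (v : Fin d → Fin n) : Finset (Sym2 (Fin d → Fin n)) :=
  (Finset.univ.filter fun w => (hGraph d n).Adj v w).image (fun w => s(v, w))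

lemma mem_edgeSet {v : Fin d → Fin n} {e : Sym2 (Fin d → Fin n)} :
    e ∈ edgeSet d n v ↔ ∃ w, (hGraph d n).Adj v w ∧ s(v, w) = e := by
  simp [edgeSet]

lemma edgeSet_card_le (hd : 1 ≤ d) (hn : 1 ≤ n) (v : Fin d → Fin n) :
    (edgeSet d n v).card ≤ d * n := by
  classical
  refine le_trans Finset.card_image_le ?_
  have hcard : (Finset.univ : Finset (Fin d × Fin n)).card = d * n := by
    simp
  rw [← hcard]
  refine Finset.card_le_card_of_injOn
    (fun w => if h : (Finset.univ.filter fun i => v i ≠ w i).Nonempty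
      then ((Finset.univ.filter fun i => v i ≠ w i).min' h,
            w ((Finset.univ.filter fun i => v i ≠ w i).min' h))
      else (⟨0, hd⟩, ⟨0, hn⟩)) (fun _ _ => Finset.mem_univ _) ?_
  intro w hw w' hw' heq
  simp only [Finset.mem_coe, Finset.mem_filter, Finset.mem_univ, true_and] at hw hw'
  obtain ⟨i, hi⟩ := Finset.card_eq_one.mp hw
  obtain ⟨i', hi'⟩ := Finset.card_eq_one.mp hw'
  have hne : (Finset.univ.filter fun j => v j ≠ w j).Nonempty := by
    rw [hi]; exact Finset.singleton_nonempty i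
  have hne' : (Finset.univ.filter fun j => v j ≠ w' j).Nonempty := by
    rw [hi']; exact Finset.singleton_nonempty i'
  dsimp only at heq
  rw [dif_pos hne, dif_pos hne'] at heq
  have hchar : ∀ j, (v j ≠ w j) ↔ j = i := by
    intro j
    rw [← Finset.mem_singleton, ← hi]; simp
  have hchar' : ∀ j, (v j ≠ w' j) ↔ j = i' := by
    intro j
    rw [← Finset.mem_singleton, ← hi']; simp
  have hmin : (Finset.univ.filter fun j => v j ≠ w j).min' hne = i := by
    have := Finset.min'_mem _ hne
    rw [Finset.mem_filter] at this
    exact (hchar _).mp this.2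
  have hmin' : (Finset.univ.filter fun j => v j ≠ w' j).min' hne' = i' := by
    have := Finset.min'_mem _ hne'
    rw [Finset.mem_filter] at this
    exact (hchar' _).mp this.2
  rw [hmin, hmin'] at heq
  obtain ⟨h1, h2⟩ := Prod.mk.injEq .. ▸ heq
  subst h1
  funext j
  by_cases hj : j = i
  · subst hj; exact h2
  · have hj1 : v j = w j := by
      by_contra hc; exact hj ((hchar j).mp hc)
    have hj2 : v j = w' j := by
      by_contra hc; exact hj ((hchar' j).mp hc)
    rw [← hj1, ← hj2]

lemma edgeSet_inter_card {v w : Fin d → Fin n} (hvw : v ≠ w) :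
    ((edgeSet d n v) ∩ (edgeSet d n w)).card ≤ 1 := by
  have hsub : edgeSet d n v ∩ edgeSet d n w ⊆ {s(v, w)} := by
    intro e he
    rcases Finset.mem_inter.mp he with ⟨hev, hew⟩
    obtain ⟨x, _, hxe⟩ := mem_edgeSet.mp hev
    obtain ⟨y, _, hye⟩ := mem_edgeSet.mp hew
    have hwmem : w ∈ e := by rw [← hye]; exact Sym2.mem_mk_left w y
    rw [← hxe] at hwmem
    rcases Sym2.mem_iff.mp hwmem with h | h
    · exact absurd h.symm hvw
    · subst h; rw [Finset.mem_singleton, ← hxe]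
  exact le_trans (Finset.card_le_card hsub) (by simp)

lemma iso_iff (ω : Sym2 (Fin d → Fin n) → Bool) (v : Fin d → Fin n) :
    isolated d n ω v ↔ ∀ e ∈ edgeSet d n v, ω e = false := by
  constructor
  · intro h e he
    obtain ⟨x, hx, rfl⟩ := mem_edgeSet.mp he
    exact h x hx
  · intro h x hx
    exact h _ (mem_edgeSet.mpr ⟨x, hx, rfl⟩)

lemma measSet (s : Set (Sym2 (Fin d → Fin n) → Bool)) : MeasurableSet s :=
  (Set.to_countable s).measurableSet

lemma percMeasure_coe_finset (p : ENNReal) (S : Finset (Sym2 (Fin d → Fin n) → Bool)) :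
    percMeasure d n p ↑S = ∑ ω ∈ S, percMeasure d n p {ω} := by
  have h : (↑S : Set (Sym2 (Fin d → Fin n) → Bool)) = ⋃ ω ∈ S, {ω} := by ext x; simp
  rw [h, measure_biUnion_finset ?_ (fun b _ => measSet _)]
  intro x _ y _ hxy
  simp only [Function.onFun, Set.disjoint_singleton]
  exact hxy

lemma meas_iso {p : ENNReal} (hp : p ≤ 1) (v : Fin d → Fin n) :
    percMeasure d n p {ω | isolated d n ω v} = (1 - p) ^ (edgeSet d n v).card := by
  rw [show {ω : Sym2 (Fin d → Fin n) → Bool | isolated d n ω v}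
      = {ω | ∀ e ∈ edgeSet d n v, ω e = false} from Set.ext fun ω => iso_iff ω v]
  exact cylinder hp _

lemma meas_iso_pair {p : ENNReal} (hp : p ≤ 1) (v w : Fin d → Fin n) :
    percMeasure d n p {ω | isolated d n ω v ∧ isolated d n ω w}
      = (1 - p) ^ (edgeSet d n v ∪ edgeSet d n w).card := by
  rw [show {ω : Sym2 (Fin d → Fin n) → Bool | isolated d n ω v ∧ isolated d n ω w}
      = {ω | ∀ e ∈ edgeSet d n v ∪ edgeSet d n w, ω e = false} from
    Set.ext fun ω => by
      simp only [Set.mem_setOf_eq]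
      rw [iso_iff ω v, iso_iff ω w]
      exact (Finset.forall_mem_union).symm]
  exact cylinder hp _

lemma connected_no_iso (hd : 1 ≤ d) (hn : 2 ≤ n) (ω : Sym2 (Fin d → Fin n) → Bool)
    (hc : (percGraph d n ω).Connected) : numIsolated d n ω = 0 := by
  rw [numIsolated, Finset.card_eq_zero, Finset.filter_eq_empty_iff]
  intro v _
  intro hiso
  have hcard : 1 < Fintype.card (Fin d → Fin n) := by
    rw [Fintype.card_fun]
    simp only [Fintype.card_fin]
    calc 1 < n := hn
    _ ≤ n ^ d := Nat.le_self_pow (by omega) n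
  obtain ⟨w, hw⟩ := Fintype.exists_ne_of_one_lt_card hcard v
  obtain ⟨walk⟩ := hc.preconnected v w
  cases walk with
  | nil => exact hw rfl
  | cons h pth =>
    change (hGraph d n).Adj v _ ∧ ω s(v, _) = true at h
    exact absurd (hiso _ h.1) (by rw [h.2]; decide)

end PercAux

lemma pz_arith (EX EX2 P0 s q A : ℝ) (hCS : EX^2 ≤ EX2 * s) (hsplit : P0 + s = 1)
    (hP0nn : 0 ≤ P0) (hs0 : 0 ≤ s) (hEX0 : 0 < EX) (hq0 : 0 ≤ q) (hq : q ≤ 1/2)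
    (hEX2_ub : EX2 ≤ EX + EX*EX/(1-q)) (hA0 : 0 < A) (hA : A ≤ EX) :
    P0 ≤ A⁻¹ + 2*q := by
  have hr0 : (0:ℝ) < 1 - q := by linarith
  have hs : s = 1 - P0 := by linarith
  rw [hs] at hCS
  have hs0' : (0:ℝ) ≤ 1 - P0 := by linarith
  have hEXsq0 : 0 < EX^2 := pow_pos hEX0 2
  have hEX2_0 : 0 < EX2 := by nlinarith [hCS, hEXsq0, hs0']
  have h1 : P0 * EX2 ≤ EX2 - EX^2 := by nlinarith [hCS]
  have hEXsq_le : EX^2 ≤ EX2 := by nlinarith [mul_nonneg hEX2_0.le hP0nn, hCS]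
  have h2 : P0 * EX^2 ≤ EX2 - EX^2 :=
    le_trans (mul_le_mul_of_nonneg_left hEXsq_le hP0nn) h1
  have hrinv2 : EX*EX/(1-q) ≤ EX^2*(1+2*q) := by
    rw [div_le_iff₀ hr0]
    nlinarith [mul_nonneg (sq_nonneg EX) (mul_nonneg hq0 (by linarith : (0:ℝ) ≤ 1 - 2*q))]
  have h3 : EX2 - EX^2 ≤ EX + EX^2*(2*q) := by nlinarith [hEX2_ub, hrinv2]
  have hne : EX ≠ 0 := ne_of_gt hEX0
  have h5 : P0 ≤ 1/EX + 2*q := by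
    rw [show 1/EX + 2*q = (EX + EX^2*(2*q))/EX^2 by field_simp]
    rw [le_div_iff₀ hEXsq0]
    linarith [h2, h3]
  have h6 : 1/EX ≤ A⁻¹ := by rw [one_div]; exact inv_anti₀ hA0 hA
  linarith

lemma main_bound (d n : ℕ) (hd : 1 ≤ d) (hn : 2 ≤ n) (q : ℝ) (hq0 : 0 ≤ q) (hq : q ≤ 1 / 2) :
    (percMeasure d n (ENNReal.ofReal q) {ω | (percGraph d n ω).Connected}).toReal
      ≤ ((n : ℝ) ^ d * (1 - q) ^ (d * n))⁻¹ + 2 * q := by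
  classical
  set p : ENNReal := ENNReal.ofReal q with hp_def
  have hp1 : p ≤ 1 := ENNReal.ofReal_le_one.mpr (by linarith)
  haveI hprob : IsProbabilityMeasure (percMeasure d n p) := percMeasure_isProb hp1
  set r : ℝ := 1 - q with hr_def
  have hr0 : (0:ℝ) < r := by rw [hr_def]; linarith
  have hr1 : r ≤ 1 := by rw [hr_def]; linarith
  have h1p : (1 : ENNReal) - p = ENNReal.ofReal r := by
    rw [hr_def, hp_def, ENNReal.ofReal_sub _ hq0, ENNReal.ofReal_one]
  have hpow : ∀ k : ℕ, ((1 - p) ^ k).toReal = r ^ k := by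
    intro k
    rw [h1p, ← ENNReal.ofReal_pow hr0.le, ENNReal.toReal_ofReal (pow_nonneg hr0.le k)]
  set m : (Sym2 (Fin d → Fin n) → Bool) → ℝ := fun ω => (percMeasure d n p {ω}).toReal
    with hm_def
  have hm0 : ∀ ω, 0 ≤ m ω := fun ω => ENNReal.toReal_nonneg
  have hPP : ∀ S : Finset (Sym2 (Fin d → Fin n) → Bool),
      (percMeasure d n p ↑S).toReal = ∑ ω ∈ S, m ω := by
    intro S
    rw [percMeasure_coe_finset, ENNReal.toReal_sum (fun ω _ => measure_ne_top _ _)]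
  have hPuniv : ∑ ω : (Sym2 (Fin d → Fin n) → Bool), m ω = 1 := by
    have h := hPP Finset.univ
    rw [Finset.coe_univ, measure_univ, ENNReal.toReal_one] at h
    exact h.symm
  have hIso : ∀ v, ∑ ω ∈ Finset.univ.filter (fun ω => isolated d n ω v), m ω
      = r ^ (edgeSet d n v).card := by
    intro v
    rw [← hPP]
    have hcoe : (↑(Finset.univ.filter fun ω => isolated d n ω v) :
        Set (Sym2 (Fin d → Fin n) → Bool)) = {ω | isolated d n ω v} := by
      ext ω; simp
    rw [hcoe, meas_iso hp1, hpow]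
  have hPair : ∀ v w, ∑ ω ∈ Finset.univ.filter
        (fun ω => isolated d n ω v ∧ isolated d n ω w), m ω
      = r ^ (edgeSet d n v ∪ edgeSet d n w).card := by
    intro v w
    rw [← hPP]
    have hcoe : (↑(Finset.univ.filter fun ω => isolated d n ω v ∧ isolated d n ω w) :
        Set (Sym2 (Fin d → Fin n) → Bool)) = {ω | isolated d n ω v ∧ isolated d n ω w} := by
      ext ω; simp
    rw [hcoe, meas_iso_pair hp1, hpow]
  set ind : (Fin d → Fin n) → (Sym2 (Fin d → Fin n) → Bool) → ℝ :=
    fun v ω => if isolated d n ω v then 1 else 0 with hind_def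
  have hind_sum : ∀ ω, ∑ v, ind v ω = (numIsolated d n ω : ℝ) := by
    intro ω
    rw [numIsolated, Finset.card_filter, Nat.cast_sum]
    exact Finset.sum_congr rfl fun v _ => by
      by_cases h : isolated d n ω v <;> simp [hind_def, h]
  set EX : ℝ := ∑ v, r ^ (edgeSet d n v).card with hEX_def
  have hEX_sum : EX = ∑ ω, (numIsolated d n ω : ℝ) * m ω := by
    have h1 : ∀ v, r ^ (edgeSet d n v).card = ∑ ω, ind v ω * m ω := by
      intro v
      rw [← hIso v, Finset.sum_filter]
      exact Finset.sum_congr rfl fun ω _ => by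
        by_cases h : isolated d n ω v <;> simp [hind_def, h]
    calc EX = ∑ v, ∑ ω, ind v ω * m ω := Finset.sum_congr rfl fun v _ => h1 v
    _ = ∑ ω, ∑ v, ind v ω * m ω := Finset.sum_comm
    _ = ∑ ω, (numIsolated d n ω : ℝ) * m ω := by
        refine Finset.sum_congr rfl fun ω _ => ?_
        rw [← Finset.sum_mul, hind_sum]
  set EX2 : ℝ := ∑ v, ∑ w, r ^ (edgeSet d n v ∪ edgeSet d n w).card with hEX2_def
  have hEX2_sum : EX2 = ∑ ω, (numIsolated d n ω : ℝ)^2 * m ω := by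
    have h1 : ∀ v w, r ^ (edgeSet d n v ∪ edgeSet d n w).card
        = ∑ ω, ind v ω * ind w ω * m ω := by
      intro v w
      rw [← hPair v w, Finset.sum_filter]
      refine Finset.sum_congr rfl fun ω _ => ?_
      by_cases h1 : isolated d n ω v <;> by_cases h2 : isolated d n ω w <;>
        simp [hind_def, h1, h2]
    calc EX2 = ∑ v, ∑ w, ∑ ω, ind v ω * ind w ω * m ω :=
          Finset.sum_congr rfl fun v _ => Finset.sum_congr rfl fun w _ => h1 v w
    _ = ∑ v, ∑ ω, ∑ w, ind v ω * ind w ω * m ω :=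
          Finset.sum_congr rfl fun v _ => Finset.sum_comm
    _ = ∑ ω, ∑ v, ∑ w, ind v ω * ind w ω * m ω := Finset.sum_comm
    _ = ∑ ω, (numIsolated d n ω : ℝ)^2 * m ω := by
        refine Finset.sum_congr rfl fun ω _ => ?_
        rw [← hind_sum ω]
        rw [show ((∑ v, ind v ω)^2 * m ω) = (∑ v, ind v ω) * ((∑ w, ind w ω) * m ω) by ring]
        rw [Finset.sum_mul]
        refine Finset.sum_congr rfl fun v _ => ?_
        rw [Finset.sum_mul, Finset.mul_sum]
        exact Finset.sum_congr rfl fun w _ => by ring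
  have hcast_n : (0:ℝ) < (n:ℝ) := by exact_mod_cast (by omega : 0 < n)
  have hEX_lb : ((n:ℝ))^d * r^(d*n) ≤ EX := by
    rw [hEX_def]
    have hterm : ∀ v : Fin d → Fin n, r^(d*n) ≤ r ^ (edgeSet d n v).card := fun v =>
      pow_le_pow_of_le_one hr0.le hr1 (edgeSet_card_le hd (by omega) v)
    calc ((n:ℝ))^d * r^(d*n) = ∑ _v : Fin d → Fin n, r^(d*n) := by
          rw [Finset.sum_const, nsmul_eq_mul, Finset.card_univ, Fintype.card_fun]
          push_cast [Fintype.card_fin]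
          ring
    _ ≤ ∑ v, r ^ (edgeSet d n v).card := Finset.sum_le_sum fun v _ => hterm v
  have hA0 : (0:ℝ) < ((n:ℝ))^d * r^(d*n) :=
    mul_pos (pow_pos hcast_n d) (pow_pos hr0 (d*n))
  have hEX0 : 0 < EX := lt_of_lt_of_le hA0 hEX_lb
  have hPP_le : ∀ v w : Fin d → Fin n, w ≠ v →
      r ^ (edgeSet d n v ∪ edgeSet d n w).card
        ≤ r ^ (edgeSet d n v).card * r ^ (edgeSet d n w).card / r := by
    intro v w hwv
    rw [le_div_iff₀ hr0]
    have hcards : (edgeSet d n v).card + (edgeSet d n w).card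
        ≤ (edgeSet d n v ∪ edgeSet d n w).card + 1 := by
      have h1 := Finset.card_union_add_card_inter (edgeSet d n v) (edgeSet d n w)
      have h2 := edgeSet_inter_card (d := d) (n := n) (Ne.symm hwv)
      omega
    calc r ^ (edgeSet d n v ∪ edgeSet d n w).card * r
        = r ^ ((edgeSet d n v ∪ edgeSet d n w).card + 1) := (pow_succ r _).symm
    _ ≤ r ^ ((edgeSet d n v).card + (edgeSet d n w).card) :=
        pow_le_pow_of_le_one hr0.le hr1 hcards
    _ = r ^ (edgeSet d n v).card * r ^ (edgeSet d n w).card := pow_add r _ _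
  have hEX2_ub : EX2 ≤ EX + EX * EX / r := by
    have hrow : ∀ v : Fin d → Fin n,
        ∑ w, r ^ (edgeSet d n v ∪ edgeSet d n w).card
          ≤ r ^ (edgeSet d n v).card
            + ∑ w, r ^ (edgeSet d n v).card * r ^ (edgeSet d n w).card / r := by
      intro v
      calc ∑ w, r ^ (edgeSet d n v ∪ edgeSet d n w).card
          = r ^ (edgeSet d n v ∪ edgeSet d n v).card
            + ∑ w ∈ Finset.univ.erase v, r ^ (edgeSet d n v ∪ edgeSet d n w).card :=
            (Finset.add_sum_erase _ _ (Finset.mem_univ v)).symm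
      _ ≤ r ^ (edgeSet d n v).card
            + ∑ w, r ^ (edgeSet d n v).card * r ^ (edgeSet d n w).card / r := by
            rw [Finset.union_self]
            refine (add_le_add_iff_left _).mpr ?_
            refine le_trans
              (Finset.sum_le_sum fun w hw => hPP_le v w (Finset.ne_of_mem_erase hw)) ?_
            refine Finset.sum_le_sum_of_subset_of_nonneg (Finset.subset_univ _)
              fun w _ _ => ?_
            have := pow_nonneg hr0.le (edgeSet d n v).card
            have := pow_nonneg hr0.le (edgeSet d n w).card
            positivity
    calc EX2 ≤ ∑ v, (r ^ (edgeSet d n v).card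
        + ∑ w, r ^ (edgeSet d n v).card * r ^ (edgeSet d n w).card / r) := by
          rw [hEX2_def]; exact Finset.sum_le_sum fun v _ => hrow v
    _ = EX + EX * EX / r := by
        rw [Finset.sum_add_distrib]
        congr 1
        simp only [← Finset.sum_div]
        congr 1
        rw [← Finset.sum_mul_sum, ← hEX_def]
  set X : (Sym2 (Fin d → Fin n) → Bool) → ℝ := fun ω => (numIsolated d n ω : ℝ) with hX_def
  set T := Finset.univ.filter (fun ω => ¬ (numIsolated d n ω = 0)) with hT_def
  set P0 : ℝ := ∑ ω ∈ Finset.univ.filter (fun ω => numIsolated d n ω = 0), m ω with hP0_def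
  have hP0nn : 0 ≤ P0 := Finset.sum_nonneg fun ω _ => hm0 ω
  have hsplit : P0 + ∑ ω ∈ T, m ω = 1 := by
    rw [hP0_def, hT_def, Finset.sum_filter_add_sum_filter_not, hPuniv]
  have hEX_T : EX = ∑ ω ∈ T, X ω * m ω := by
    rw [hEX_sum, hT_def]
    refine (Finset.sum_filter_of_ne ?_).symm
    intro ω _ hne h0
    apply hne
    simp [hX_def, h0]
  have hsub : {ω | (percGraph d n ω).Connected} ⊆ {ω | numIsolated d n ω = 0} :=
    fun ω hc => connected_no_iso hd hn ω hc
  have hfinal : (percMeasure d n p {ω | (percGraph d n ω).Connected}).toReal ≤ P0 := by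
    have h2 : (percMeasure d n p {ω | numIsolated d n ω = 0}).toReal = P0 := by
      have hset : {ω | numIsolated d n ω = 0}
          = (↑(Finset.univ.filter fun ω : Sym2 (Fin d → Fin n) → Bool =>
              numIsolated d n ω = 0) : Set (Sym2 (Fin d → Fin n) → Bool)) := by
        ext ω; simp
      rw [hset, hPP]
    rw [← h2]
    exact ENNReal.toReal_mono (measure_ne_top _ _) (measure_mono hsub)
  clear_value X T P0 EX EX2 m ind
  have hCS : EX^2 ≤ EX2 * (∑ ω ∈ T, m ω) := by
    have h := Finset.sum_mul_sq_le_sq_mul_sq T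
      (fun ω => X ω * Real.sqrt (m ω)) (fun ω => Real.sqrt (m ω))
    have e1 : ∑ ω ∈ T, (X ω * Real.sqrt (m ω)) * Real.sqrt (m ω) = ∑ ω ∈ T, X ω * m ω :=
      Finset.sum_congr rfl fun ω _ => by
        rw [mul_assoc, Real.mul_self_sqrt (hm0 ω)]
    have e2 : ∑ ω ∈ T, (X ω * Real.sqrt (m ω))^2 = ∑ ω ∈ T, X ω^2 * m ω :=
      Finset.sum_congr rfl fun ω _ => by
        rw [mul_pow, Real.sq_sqrt (hm0 ω)]
    have e3 : ∑ ω ∈ T, (Real.sqrt (m ω))^2 = ∑ ω ∈ T, m ω :=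
      Finset.sum_congr rfl fun ω _ => Real.sq_sqrt (hm0 ω)
    rw [e1, e2, e3] at h
    rw [hEX_T]
    refine le_trans h ?_
    refine mul_le_mul_of_nonneg_right ?_ (Finset.sum_nonneg fun ω _ => hm0 ω)
    rw [hEX2_sum]
    simp only [hX_def]
    refine Finset.sum_le_sum_of_subset_of_nonneg (Finset.subset_univ _) fun ω _ _ =>
      mul_nonneg (sq_nonneg _) (hm0 ω)
  have hsT_nonneg : 0 ≤ ∑ ω ∈ T, m ω := Finset.sum_nonneg fun ω _ => hm0 ω
  have hP0_ub : P0 ≤ (((n:ℝ))^d * r^(d*n))⁻¹ + 2*q := by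
    refine pz_arith EX EX2 P0 _ q _ hCS hsplit hP0nn hsT_nonneg hEX0 hq0 hq
      (hr_def ▸ hEX2_ub) hA0 hEX_lb
  exact le_trans hfinal hP0_ub

lemma one_sub_ge_exp (q : ℝ) (hq0 : 0 ≤ q) (hq : q ≤ 1/2) :
    Real.exp (-(q + 2*q^2)) ≤ 1 - q := by
  have hq1 : (0:ℝ) < 1 - q := by linarith
  have h2 : (1-q)⁻¹ ≤ 1 + (q + 2*q^2) := by
    rw [← one_div, div_le_iff₀ hq1]; nlinarith
  have h3 : (1-q)⁻¹ ≤ Real.exp (q + 2*q^2) := by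
    refine le_trans h2 ?_
    have := Real.add_one_le_exp (q + 2*q^2); linarith
  have h4 := inv_anti₀ (inv_pos.mpr hq1) h3
  rw [inv_inv] at h4
  rw [Real.exp_neg]
  exact h4

lemma dnq_bound (D M L l : ℝ) (hD : 1 ≤ D) (hM : 1 ≤ M) (hL : 0 ≤ L)
    (hLl : L ≤ D * l) (hl : 0 ≤ l)
    (hsmall : D * (l/M) + 4*D*(l^2/M) ≤ 1) :
    D*(M+1)*(L/(D*M) + 2*(L/(D*M))^2) ≤ L + 1 := by
  have hD0 : (0:ℝ) < D := by linarith
  have hM0 : (0:ℝ) < M := by linarith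
  set q := L/(D*M) with hqdef
  set u := l/M with hudef
  have hu0 : 0 ≤ u := by rw [hudef]; positivity
  have hq0' : 0 ≤ q := by rw [hqdef]; positivity
  have hql : q ≤ u := by
    rw [hqdef, hudef, div_le_div_iff₀ (by positivity) hM0]
    nlinarith
  have hDq : D*(M+1)*q = L + L/M := by rw [hqdef]; field_simp
  have hLM : L/M ≤ D*u := by
    have h1 : L/M ≤ (D*l)/M := (div_le_div_iff_of_pos_right hM0).mpr hLl
    have h2 : (D*l)/M = D*u := by rw [hudef]; ring
    linarith [h1, h2.le, h2.ge]
  have h3 : L/M ≤ L := div_le_self hL hM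
  have hsmall' : D*u + 4*D*(l*u) ≤ 1 := by
    have : l^2/M = l*u := by rw [hudef]; ring
    rw [this] at hsmall
    exact hsmall
  have expand : D*(M+1)*(q + 2*q^2) = D*(M+1)*q + 2*(D*(M+1)*q)*q := by ring
  rw [expand, hDq]
  have hb1 : 2*(L + L/M)*q ≤ 4*L*q := by nlinarith
  have hb2 : 4*L*q ≤ 4*(D*l)*u := by
    have hx1 : L*q ≤ L*u := mul_le_mul_of_nonneg_left hql hL
    have hx2 : L*u ≤ (D*l)*u := mul_le_mul_of_nonneg_right hLl hu0
    linarith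
  have hb3 : 4*(D*l)*u = 4*D*(l*u) := by ring
  linarith

lemma A_lb (d n : ℕ) (c : ℝ) (hn : 2 ≤ n) (q : ℝ) (hq0 : 0 ≤ q) (hq : q ≤ 1/2)
    (hbound : (↑(d*n) : ℝ) * (q + 2*q^2) ≤ c) :
    Real.exp ((d:ℝ)*Real.log n - c) ≤ (n:ℝ)^d * (1-q)^(d*n) := by
  have hn0 : (0:ℝ) < n := by
    have : (0:ℕ) < n := by omega
    exact_mod_cast this
  have h1 : ((n:ℝ))^d = Real.exp ((d:ℝ)*Real.log n) := by
    rw [Real.exp_nat_mul, Real.exp_log hn0]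
  have h2 : Real.exp (-(↑(d*n):ℝ) * (q+2*q^2)) ≤ (1-q)^(d*n) := by
    have hkey := one_sub_ge_exp q hq0 hq
    calc Real.exp (-(↑(d*n):ℝ) * (q+2*q^2))
        = Real.exp (-(q+2*q^2)) ^ (d*n) := by
          rw [← Real.exp_nat_mul]; congr 1; ring
    _ ≤ (1-q)^(d*n) := pow_le_pow_left₀ (Real.exp_pos _).le hkey _
  calc Real.exp ((d:ℝ)*Real.log n - c)
      ≤ Real.exp ((d:ℝ)*Real.log n + (-(↑(d*n):ℝ)*(q+2*q^2))) := by
        apply Real.exp_le_exp.mpr; linarith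
  _ = (n:ℝ)^d * Real.exp (-(↑(d*n):ℝ)*(q+2*q^2)) := by rw [Real.exp_add, h1]
  _ ≤ (n:ℝ)^d * (1-q)^(d*n) :=
        mul_le_mul_of_nonneg_left h2 (by positivity)

/-- if `λ(n) - d log n → -∞`, the probability that the percolated
Hamming graph is connected tends to `0`. -/
theorem connectivity_subcritical (d : ℕ) (hd : 1 ≤ d) (lam : ℕ → ℝ)
    (h0 : ∀ n, 0 ≤ lam n) (h1 : ∀ n : ℕ, lam n ≤ d * ((n : ℝ) - 1))
    (ht : Tendsto (fun n : ℕ => lam n - d * Real.log n) atTop atBot) :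
    Tendsto
      (fun n : ℕ =>
        (percMeasure d n (ENNReal.ofReal (lam n / (d * ((n : ℝ) - 1))))
          {ω | (percGraph d n ω).Connected}).toReal)
      atTop (𝓝 0) := by
  -- basic tendsto facts
  have t1 : Tendsto (fun k : ℕ => Real.log k / ((k:ℝ) - 1)) atTop (𝓝 0) := by
    have h := (Real.tendsto_pow_log_div_mul_add_atTop 1 (-1) 1 one_ne_zero).comp
      (tendsto_natCast_atTop_atTop (R := ℝ))
    simpa [Function.comp_def, sub_eq_add_neg] using h
  have t2 : Tendsto (fun k : ℕ => (Real.log k)^2 / ((k:ℝ) - 1)) atTop (𝓝 0) := by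
    have h := (Real.tendsto_pow_log_div_mul_add_atTop 1 (-1) 2 one_ne_zero).comp
      (tendsto_natCast_atTop_atTop (R := ℝ))
    simpa [Function.comp_def, sub_eq_add_neg] using h
  have hA : Tendsto (fun n : ℕ => Real.exp (lam n - d*Real.log n + 1)) atTop (𝓝 0) :=
    Real.tendsto_exp_atBot.comp (tendsto_atBot_add_const_right _ 1 ht)
  have hB : Tendsto (fun n : ℕ =>
      Real.exp (lam n - d*Real.log n + 1) + 2*(Real.log n/((n:ℝ)-1))) atTop (𝓝 0) := by
    simpa using hA.add (t1.const_mul 2)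
  refine squeeze_zero' (Filter.Eventually.of_forall fun n => ENNReal.toReal_nonneg) ?_ hB
  have e1 : ∀ᶠ n : ℕ in atTop, lam n - d*Real.log n ≤ 0 :=
    ht.eventually (eventually_le_atBot 0)
  have e2 : ∀ᶠ n : ℕ in atTop, 2 ≤ n := eventually_ge_atTop 2
  have e3 : ∀ᶠ n : ℕ in atTop, Real.log n/((n:ℝ)-1) ≤ 1/2 :=
    (t1.eventually_lt_const (by norm_num : (0:ℝ) < 1/2)).mono fun n h => le_of_lt h
  have e4 : ∀ᶠ n : ℕ in atTop,
      (d:ℝ)*(Real.log n/((n:ℝ)-1)) + 4*(d:ℝ)*((Real.log n)^2/((n:ℝ)-1)) ≤ 1 := by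
    have tt : Tendsto (fun n : ℕ =>
        (d:ℝ)*(Real.log n/((n:ℝ)-1)) + 4*(d:ℝ)*((Real.log n)^2/((n:ℝ)-1))) atTop (𝓝 0) := by
      simpa using (t1.const_mul (d:ℝ)).add (t2.const_mul (4*(d:ℝ)))
    exact (tt.eventually_lt_const (by norm_num : (0:ℝ) < 1)).mono fun n h => le_of_lt h
  filter_upwards [e1, e2, e3, e4] with n hn1 hn2 hn3 hn4
  have hM1 : (1:ℝ) ≤ (n:ℝ) - 1 := by
    have : (2:ℝ) ≤ (n:ℝ) := by exact_mod_cast hn2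
    linarith
  have hM0 : (0:ℝ) < (n:ℝ) - 1 := by linarith
  have hd1 : (1:ℝ) ≤ (d:ℝ) := by exact_mod_cast hd
  have hn1R : (1:ℝ) ≤ (n:ℝ) := by linarith
  have hl0 : 0 ≤ Real.log n := Real.log_nonneg hn1R
  have hq0 : 0 ≤ lam n / (d * ((n:ℝ) - 1)) :=
    div_nonneg (h0 n) (mul_nonneg (by linarith) (by linarith))
  have hLl : lam n ≤ (d:ℝ) * Real.log n := by linarith
  have hql : lam n / (d * ((n:ℝ) - 1)) ≤ Real.log n / ((n:ℝ)-1) := by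
    rw [div_le_div_iff₀ (by positivity) hM0]
    nlinarith
  have hqhalf : lam n / (d * ((n:ℝ) - 1)) ≤ 1/2 := le_trans hql hn3
  have key := main_bound d n hd hn2 (lam n / (d * ((n:ℝ) - 1))) hq0 hqhalf
  have hdn : (↑(d*n):ℝ) * (lam n / (d * ((n:ℝ) - 1))
      + 2*(lam n / (d * ((n:ℝ) - 1)))^2) ≤ lam n + 1 := by
    have hb := dnq_bound (d:ℝ) ((n:ℝ)-1) (lam n) (Real.log n) hd1 hM1 (h0 n) hLl hl0 hn4
    have hcast : (↑(d*n):ℝ) = (d:ℝ)*(((n:ℝ)-1)+1) := by push_cast; ring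
    rw [hcast]
    exact hb
  have hAlb := A_lb d n (lam n + 1) hn2 (lam n / (d * ((n:ℝ) - 1))) hq0 hqhalf hdn
  have hinv : ((n:ℝ)^d*(1 - lam n / (d * ((n:ℝ) - 1)))^(d*n))⁻¹
      ≤ Real.exp (lam n - d*Real.log n + 1) := by
    have h5 := inv_anti₀ (Real.exp_pos _) hAlb
    rw [← Real.exp_neg] at h5
    have : -((d:ℝ)*Real.log n - (lam n + 1)) = lam n - d*Real.log n + 1 := by ring
    rw [this] at h5
    exact h5
  refine le_trans key ?_
  have h2q : 2 * (lam n / (d * ((n:ℝ) - 1))) ≤ 2*(Real.log n/((n:ℝ)-1)) := by linarith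
  linarith
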